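/- arXiv:2509.24565 — 2 statements merged into one kernel-verified Lean document; each statement's English description precedes it below -/
import Mathlib

section
/- Let r > 1 be an integer and k, k1, ..., kr be nonnegative reals with k1 ≥ 1 and k1 + ... + kr = k. Then (1/r) · Σ_{i=1}^{r} k_i / (Σ_{j=1}^{i} k_j) ≤ 1 − (1 − 1/r) · k^{−1/(r−1)}. -/
theorem avg_ratio_prefix_one (r : ℕ) (hr : 1 < r) (k : ℕ → ℝ) (K : ℝ)
    (hnn : ∀ i ∈ Finset.Icc 1 r, 0 ≤ k i) (hk1 : 1 ≤ k 1)
    (hsum : ∑ i ∈ Finset.Icc 1 r, k i = K) :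
    (1 / (r : ℝ)) * ∑ i ∈ Finset.Icc 1 r, k i / (∑ j ∈ Finset.Icc 1 i, k j) ≤
      1 - (1 - 1 / (r : ℝ)) * K ^ (-(1 : ℝ) / ((r : ℝ) - 1)) := by
  set S : ℕ → ℝ := fun n => ∑ j ∈ Finset.Icc 1 n, k j with hSdef
  have hSone : ∀ n, 1 ≤ n → n ≤ r → (1:ℝ) ≤ S n := by
    intro n h1 h2
    calc (1:ℝ) ≤ k 1 := hk1
      _ ≤ S n := Finset.single_le_sum (f := k)
          (fun i hi => hnn i (Finset.mem_Icc.mpr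
            ⟨(Finset.mem_Icc.mp hi).1, le_trans (Finset.mem_Icc.mp hi).2 h2⟩))
          (Finset.mem_Icc.mpr ⟨le_rfl, h1⟩)
  have hSpos : ∀ n, 1 ≤ n → n ≤ r → (0:ℝ) < S n := fun n h1 h2 =>
    lt_of_lt_of_le one_pos (hSone n h1 h2)
  have hks : ∀ m : ℕ, k (m+1) = S (m+1) - S m := by
    intro m
    have : S (m+1) = S m + k (m+1) := by
      simp only [hSdef]
      rw [Finset.sum_Icc_succ_top (Nat.le_add_left 1 m)]
    linarith
  have hSr : S r = K := hsum
  have hKpos : (0:ℝ) < K := by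
    rw [← hSr]; exact hSpos r (le_of_lt hr) le_rfl
  have hrpos : (0:ℝ) < (r:ℝ) := by positivity
  have hr1 : (0:ℝ) < (r:ℝ) - 1 := by
    have : (1:ℝ) < (r:ℝ) := by exact_mod_cast hr
    linarith
  set w : ℝ := 1 / ((r:ℝ) - 1) with hwdef
  have hwpos : 0 < w := by positivity
  -- rewrite each term
  have hterm : ∀ i ∈ Finset.Icc 1 r, k i / S i = 1 - S (i-1) / S i := by
    intro i hi
    obtain ⟨h1, h2⟩ := Finset.mem_Icc.mp hi
    obtain ⟨m, rfl⟩ : ∃ m, i = m + 1 := ⟨i - 1, by omega⟩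
    have hpos := hSpos (m+1) h1 h2
    rw [hks m]
    have : (m + 1) - 1 = m := by omega
    rw [this]
    field_simp
  rw [Finset.sum_congr rfl hterm, Finset.sum_sub_distrib, Finset.sum_const,
    Nat.card_Icc]
  have hcard : ((r + 1 - 1 : ℕ) : ℝ) = (r : ℝ) := by norm_num
  -- the ratio sum equals sum over Icc 2 r
  have hsplit : ∑ i ∈ Finset.Icc 1 r, S (i-1) / S i
      = ∑ i ∈ Finset.Icc 2 r, S (i-1) / S i := by
    rw [show Finset.Icc 1 r = insert 1 (Finset.Icc 2 r) by
      rw [Finset.Icc_eq_cons_Ioc (le_of_lt hr), Finset.cons_eq_insert]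
      congr 1]
    rw [Finset.sum_insert (by simp)]
    simp [hSdef]
  set T : ℝ := ∑ i ∈ Finset.Icc 2 r, S (i-1) / S i with hTdef
  -- telescoping product
  have htel : ∀ n, 1 ≤ n → n ≤ r →
      ∏ i ∈ Finset.Icc 2 n, S (i-1) / S i = S 1 / S n := by
    intro n
    induction n with
    | zero => omega
    | succ m ih =>
      intro h1 h2
      rcases Nat.lt_or_ge m 1 with hm | hm
      · have : m = 0 := by omega
        subst this
        have h1pos := hSpos 1 le_rfl (le_of_lt hr)
        simp [div_self (ne_of_gt h1pos)]
      · have hstep := ih hm (by omega)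
        rw [Finset.prod_Icc_succ_top (by omega : 2 ≤ m + 1), hstep]
        have hmpos := hSpos m hm (by omega)
        have hm1pos := hSpos (m+1) (by omega) h2
        have : (m + 1) - 1 = m := by omega
        rw [this]
        field_simp
  -- AM-GM
  have hcard2 : (Finset.Icc 2 r).card = r - 1 := by rw [Nat.card_Icc]; omega
  have hcardR : ((Finset.Icc 2 r).card : ℝ) = (r:ℝ) - 1 := by
    rw [hcard2]; push_cast [Nat.cast_sub (le_of_lt hr)]; ring
  have hznn : ∀ i ∈ Finset.Icc 2 r, 0 ≤ S (i-1) / S i := by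
    intro i hi
    obtain ⟨h1, h2⟩ := Finset.mem_Icc.mp hi
    have := hSpos (i-1) (by omega) (by omega)
    have := hSpos i (by omega) h2
    positivity
  have hamgm := Real.geom_mean_le_arith_mean_weighted (Finset.Icc 2 r)
    (fun _ => w) (fun i => S (i-1) / S i)
    (fun i _ => le_of_lt hwpos)
    (by rw [Finset.sum_const, nsmul_eq_mul, hcardR, hwdef]; field_simp)
    hznn
  rw [Real.finset_prod_rpow _ _ hznn, htel r (le_of_lt hr) le_rfl] at hamgm
  -- lower bound the geometric mean
  have hgeo : K ^ (-w) ≤ (S 1 / S r) ^ w := by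
    have h1leS1 := hSone 1 le_rfl (le_of_lt hr)
    have hle : K⁻¹ ≤ S 1 / S r := by
      rw [hSr, inv_eq_one_div]
      gcongr
    calc K ^ (-w) = (K⁻¹) ^ w := by
          rw [Real.rpow_neg (le_of_lt hKpos), ← Real.inv_rpow (le_of_lt hKpos)]
      _ ≤ (S 1 / S r) ^ w := Real.rpow_le_rpow (by positivity) hle (le_of_lt hwpos)
  have hT : ((r:ℝ) - 1) * K ^ (-w) ≤ T := by
    have h2 : (S 1 / S r) ^ w ≤ ∑ i ∈ Finset.Icc 2 r, w * (S (i-1) / S i) := hamgm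
    have h3 : ∑ i ∈ Finset.Icc 2 r, w * (S (i-1) / S i) = w * T := by
      rw [hTdef, Finset.mul_sum]
    rw [h3] at h2
    have h4 : K ^ (-w) ≤ w * T := le_trans hgeo h2
    calc ((r:ℝ) - 1) * K ^ (-w) ≤ ((r:ℝ) - 1) * (w * T) := by
          exact mul_le_mul_of_nonneg_left h4 (le_of_lt hr1)
      _ = T := by rw [hwdef]; field_simp
  -- finish
  have hexp : -(1:ℝ) / ((r:ℝ) - 1) = -w := by rw [hwdef]; ring
  rw [hexp, hsplit, Nat.add_sub_cancel, nsmul_eq_mul, mul_one]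
  have hKw : 0 ≤ K ^ (-w) := Real.rpow_nonneg (le_of_lt hKpos) _
  rw [mul_sub, sub_le_iff_le_add]
  have : (1 - 1 / (r:ℝ)) * K ^ (-w) = (1/(r:ℝ)) * (((r:ℝ) - 1) * K ^ (-w)) := by
    field_simp
  rw [this]
  have hmul : (1/(r:ℝ)) * (((r:ℝ)-1) * K ^ (-w)) ≤ (1/(r:ℝ)) * T :=
    mul_le_mul_of_nonneg_left hT (by positivity)
  have : (1/(r:ℝ)) * (r:ℝ) = 1 := by field_simp
  linarith
end

section
/- Let r, d ≥ 1 be integers with r ≥ 2d, and let k, k1, ..., kr ≥ 0 be reals with k1 ≥ 1 and k1 + ... + kr = k. Then (1/r) · Σ_{i=1}^{r} (Σ_{j=max(i−d+1,1)}^{i} k_j) / (Σ_{j=1}^{i} k_j) ≤ 1 − (1 − 1/⌊r/d⌋) · k^{−1/(⌊r/d⌋−1)}. -/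
set_option maxHeartbeats 1000000 in

theorem avg_ratio_prefix_d (r d : ℕ) (hd : 1 ≤ d) (hrd : 2 * d ≤ r)
    (k : ℕ → ℝ) (K : ℝ)
    (hnn : ∀ i ∈ Finset.Icc 1 r, 0 ≤ k i) (hk1 : 1 ≤ k 1)
    (hsum : ∑ i ∈ Finset.Icc 1 r, k i = K) :
    (1 / (r : ℝ)) *
        ∑ i ∈ Finset.Icc 1 r,
          (∑ j ∈ Finset.Icc (max (i - d + 1) 1) i, k j) / (∑ j ∈ Finset.Icc 1 i, k j) ≤
      1 - (1 - 1 / ((r / d : ℕ) : ℝ)) * K ^ (-(1 : ℝ) / (((r / d : ℕ) : ℝ) - 1)) := by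
  classical
  set m := r / d with hm
  have hm2 : 2 ≤ m := (Nat.le_div_iff_mul_le (by omega)).mpr (by omega)
  have hmd : m * d ≤ r := Nat.div_mul_le_self r d
  have hrd' : d < r := by omega
  set S : ℕ → ℝ := fun i => ∑ j ∈ Finset.Icc 1 i, k j with hSdef
  have hmono : ∀ i i', i ≤ i' → i' ≤ r → S i ≤ S i' := by
    intro i i' h h'
    apply Finset.sum_le_sum_of_subset_of_nonneg (Finset.Icc_subset_Icc_right h)
    intro j hj _
    exact hnn j (Finset.mem_Icc.mpr ⟨(Finset.mem_Icc.mp hj).1,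
      le_trans (Finset.mem_Icc.mp hj).2 h'⟩)
  have hS1 : ∀ i, 1 ≤ i → i ≤ r → 1 ≤ S i := by
    intro i h1 h2
    calc (1:ℝ) ≤ k 1 := hk1
      _ ≤ S i := Finset.single_le_sum
        (fun j hj => hnn j (Finset.mem_Icc.mpr ⟨(Finset.mem_Icc.mp hj).1,
          (Finset.mem_Icc.mp hj).2.trans h2⟩))
        (Finset.mem_Icc.mpr ⟨le_refl 1, h1⟩)
  have hSK : ∀ i, i ≤ r → S i ≤ K := fun i h => hsum ▸ hmono i r h le_rfl
  have hK1 : (1:ℝ) ≤ K := le_trans (hS1 1 le_rfl (by omega)) (hSK 1 (by omega))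
  have hKpos : (0:ℝ) < K := by linarith
  have hsplit : ∀ i : ℕ, S (i - d) + ∑ j ∈ Finset.Icc (i - d + 1) i, k j = S i := by
    intro i
    simp only [hSdef]
    rw [show (1:ℕ) = 0 + 1 from rfl, Finset.Icc_add_one_left_eq_Ioc, Finset.Icc_add_one_left_eq_Ioc, zero_add, Finset.Icc_add_one_left_eq_Ioc]
    exact Finset.sum_Ioc_consecutive _ (Nat.zero_le _) (Nat.sub_le i d)
  have hterm : ∀ i ∈ Finset.Icc 1 r,
      (∑ j ∈ Finset.Icc (max (i - d + 1) 1) i, k j) / S i = 1 - S (i - d) / S i := by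
    intro i hi
    obtain ⟨hi1, hi2⟩ := Finset.mem_Icc.mp hi
    have hSpos : 0 < S i := lt_of_lt_of_le zero_lt_one (hS1 i hi1 hi2)
    have hmax : max (i - d + 1) 1 = i - d + 1 := max_eq_left (by omega)
    have hnum : ∑ j ∈ Finset.Icc (i - d + 1) i, k j = S i - S (i - d) := by
      have := hsplit i; linarith
    rw [hmax, hnum, sub_div, div_self hSpos.ne']
  have hsum_eq : ∑ i ∈ Finset.Icc 1 r,
      (∑ j ∈ Finset.Icc (max (i - d + 1) 1) i, k j) / (∑ j ∈ Finset.Icc 1 i, k j)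
      = (r : ℝ) - ∑ i ∈ Finset.Icc 1 r, S (i - d) / S i := by
    rw [Finset.sum_congr rfl hterm, Finset.sum_sub_distrib, Finset.sum_const, Nat.card_Icc]
    simp
  set n := r - d with hn
  have hnpos : 0 < n := by omega
  have hzero : ∑ i ∈ Finset.Icc 1 r, S (i - d) / S i
      = ∑ i ∈ Finset.Icc (d + 1) r, S (i - d) / S i := by
    refine (Finset.sum_subset (Finset.Icc_subset_Icc (by omega) le_rfl) ?_).symm
    intro i hi hni
    have h1 := Finset.mem_Icc.mp hi
    have hid : i - d = 0 := by
      simp only [Finset.mem_Icc, not_and, not_le] at hni; omega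
    rw [hid]
    simp [hSdef]
  have hncard : (Finset.Icc (d + 1) r).card = n := by rw [Nat.card_Icc]; omega
  have hQpos : ∀ i ∈ Finset.Icc (d + 1) r, 0 ≤ S (i - d) / S i := by
    intro i hi
    obtain ⟨h1, h2⟩ := Finset.mem_Icc.mp hi
    have hA := hS1 (i - d) (by omega) (by omega)
    have hB := hS1 i (by omega) h2
    positivity
  have hAM := Real.geom_mean_le_arith_mean_weighted (Finset.Icc (d + 1) r)
    (fun _ => (n : ℝ)⁻¹) (fun i => S (i - d) / S i)
    (fun i _ => by positivity)
    (by
      rw [Finset.sum_const, hncard, nsmul_eq_mul]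
      field_simp)
    hQpos
  have hprod : K ^ (-(d : ℝ)) ≤ ∏ i ∈ Finset.Icc (d + 1) r, (S (i - d) / S i) := by
    have hre : ∏ i ∈ Finset.Icc (d + 1) r, S (i - d) = ∏ j ∈ Finset.Icc 1 n, S j := by
      refine Finset.prod_nbij' (fun i => i - d) (fun j => j + d) ?_ ?_ ?_ ?_ ?_
      · intro i hi; obtain ⟨h1, h2⟩ := Finset.mem_Icc.mp hi
        refine Finset.mem_Icc.mpr ⟨show 1 ≤ i - d by omega, show i - d ≤ n by omega⟩
      · intro j hj; obtain ⟨h1, h2⟩ := Finset.mem_Icc.mp hj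
        refine Finset.mem_Icc.mpr ⟨show d + 1 ≤ j + d by omega, show j + d ≤ r by omega⟩
      · intro i hi; obtain ⟨h1, h2⟩ := Finset.mem_Icc.mp hi
        show i - d + d = i; omega
      · intro j hj
        show j + d - d = j; omega
      · intro i hi; rfl
    have hA : (1:ℝ) ≤ ∏ j ∈ Finset.Icc 1 d, S j := by
      have := Finset.prod_le_prod (f := fun _ : ℕ => (1:ℝ)) (g := S)
        (s := Finset.Icc 1 d) (fun j _ => zero_le_one)
        (fun j hj => by
          obtain ⟨h1, h2⟩ := Finset.mem_Icc.mp hj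
          exact hS1 j h1 (by omega))
      simpa using this
    have hBpos : (0:ℝ) < ∏ j ∈ Finset.Icc (d + 1) n, S j :=
      Finset.prod_pos (fun j hj => by
        obtain ⟨h1, h2⟩ := Finset.mem_Icc.mp hj
        exact lt_of_lt_of_le zero_lt_one (hS1 j (by omega) (by omega)))
    have hCpos : (0:ℝ) < ∏ j ∈ Finset.Icc (n + 1) r, S j :=
      Finset.prod_pos (fun j hj => by
        obtain ⟨h1, h2⟩ := Finset.mem_Icc.mp hj
        exact lt_of_lt_of_le zero_lt_one (hS1 j (by omega) h2))
    have hC : ∏ j ∈ Finset.Icc (n + 1) r, S j ≤ K ^ d := by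
      have hcard : (Finset.Icc (n + 1) r).card = d := by rw [Nat.card_Icc]; omega
      calc ∏ j ∈ Finset.Icc (n + 1) r, S j
          ≤ ∏ j ∈ Finset.Icc (n + 1) r, K := by
            refine Finset.prod_le_prod (fun j hj => ?_) (fun j hj => ?_)
            · obtain ⟨h1, h2⟩ := Finset.mem_Icc.mp hj
              exact le_of_lt (lt_of_lt_of_le zero_lt_one (hS1 j (by omega) h2))
            · exact hSK j (Finset.mem_Icc.mp hj).2
        _ = K ^ d := by rw [Finset.prod_const, hcard]
    have hnumsplit : ∏ j ∈ Finset.Icc 1 n, S j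
        = (∏ j ∈ Finset.Icc 1 d, S j) * ∏ j ∈ Finset.Icc (d + 1) n, S j := by
      rw [show (1:ℕ) = 0 + 1 from rfl, Finset.Icc_add_one_left_eq_Ioc, Finset.Icc_add_one_left_eq_Ioc, zero_add, Finset.Icc_add_one_left_eq_Ioc]
      exact (Finset.prod_Ioc_consecutive _ (Nat.zero_le _) (by omega)).symm
    have hdensplit : ∏ i ∈ Finset.Icc (d + 1) r, S i
        = (∏ j ∈ Finset.Icc (d + 1) n, S j) * ∏ j ∈ Finset.Icc (n + 1) r, S j := by
      rw [Finset.Icc_add_one_left_eq_Ioc, Finset.Icc_add_one_left_eq_Ioc, Finset.Icc_add_one_left_eq_Ioc]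
      exact (Finset.prod_Ioc_consecutive _ (by omega) (by omega)).symm
    rw [Finset.prod_div_distrib, hre, hnumsplit, hdensplit]
    have heq : (∏ j ∈ Finset.Icc 1 d, S j) * (∏ j ∈ Finset.Icc (d+1) n, S j) /
        ((∏ j ∈ Finset.Icc (d+1) n, S j) * ∏ j ∈ Finset.Icc (n+1) r, S j)
        = (∏ j ∈ Finset.Icc 1 d, S j) / (∏ j ∈ Finset.Icc (n+1) r, S j) := by
      field_simp
    rw [heq]
    have hKd : K ^ (-(d:ℝ)) = 1 / K ^ d := by
      rw [Real.rpow_neg hKpos.le, Real.rpow_natCast, one_div]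
    rw [hKd, div_le_div_iff₀ (by positivity) hCpos]
    nlinarith [pow_pos hKpos d]
  -- combine
  set E : ℝ := K ^ (-(1:ℝ) / ((m:ℝ) - 1)) with hE
  have hEpos : 0 < E := Real.rpow_pos_of_pos hKpos _
  have hm1pos : (0:ℝ) < (m:ℝ) - 1 := by
    have : (2:ℝ) ≤ (m:ℝ) := by exact_mod_cast hm2
    linarith
  have hnposR : (0:ℝ) < (n:ℝ) := by exact_mod_cast hnpos
  have hnr : (n:ℝ) = (r:ℝ) - (d:ℝ) := by
    rw [hn]; push_cast [Nat.cast_sub hrd'.le]; ring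
  have hmr : (m:ℝ) * (d:ℝ) ≤ (r:ℝ) := by exact_mod_cast hmd
  have hQsum : (n:ℝ) * E ≤ ∑ i ∈ Finset.Icc (d + 1) r, S (i - d) / S i := by
    have h1 : (∏ i ∈ Finset.Icc (d+1) r, (S (i-d) / S i)) ^ ((n:ℝ)⁻¹)
        ≤ ∑ i ∈ Finset.Icc (d+1) r, (n:ℝ)⁻¹ * (S (i-d) / S i) := by
      calc (∏ i ∈ Finset.Icc (d+1) r, (S (i-d) / S i)) ^ ((n:ℝ)⁻¹)
          = ∏ i ∈ Finset.Icc (d+1) r, (S (i-d) / S i) ^ ((n:ℝ)⁻¹) :=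
            (Real.finset_prod_rpow _ _ hQpos _).symm
        _ ≤ _ := hAM
    have h2 : (K ^ (-(d:ℝ))) ^ ((n:ℝ)⁻¹)
        ≤ (∏ i ∈ Finset.Icc (d+1) r, (S (i-d) / S i)) ^ ((n:ℝ)⁻¹) :=
      Real.rpow_le_rpow (by positivity) hprod (by positivity)
    have h3 : E ≤ (K ^ (-(d:ℝ))) ^ ((n:ℝ)⁻¹) := by
      rw [← Real.rpow_mul hKpos.le]
      apply Real.rpow_le_rpow_of_exponent_le hK1
      rw [neg_mul, neg_div, neg_le_neg_iff, ← div_eq_mul_inv, div_le_div_iff₀ hnposR hm1pos]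
      nlinarith
    have h4 : E ≤ ∑ i ∈ Finset.Icc (d+1) r, (n:ℝ)⁻¹ * (S (i-d) / S i) :=
      le_trans h3 (le_trans h2 h1)
    rw [← Finset.mul_sum] at h4
    calc (n:ℝ) * E ≤ (n:ℝ) * ((n:ℝ)⁻¹ * ∑ i ∈ Finset.Icc (d+1) r, S (i-d) / S i) :=
        mul_le_mul_of_nonneg_left h4 hnposR.le
      _ = ∑ i ∈ Finset.Icc (d+1) r, S (i-d) / S i := by
        field_simp
  rw [hsum_eq, hzero]
  have hrposR : (0:ℝ) < (r:ℝ) := by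
    have : 0 < r := by omega
    exact_mod_cast this
  have hmposR : (0:ℝ) < (m:ℝ) := by linarith
  have hun : (1 - 1/(m:ℝ)) * (r:ℝ) ≤ (n:ℝ) := by
    rw [← sub_nonneg]
    have h5 : (m:ℝ) * ((n:ℝ) - (1 - 1/(m:ℝ)) * (r:ℝ)) = (m:ℝ) * (n:ℝ) - ((m:ℝ) - 1) * (r:ℝ) := by
      field_simp
    nlinarith [hmr, hnr]
  have hkey : (1 - 1/(m:ℝ)) * E * (r:ℝ) ≤ ∑ i ∈ Finset.Icc (d+1) r, S (i-d) / S i := by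
    calc (1 - 1/(m:ℝ)) * E * (r:ℝ) = ((1 - 1/(m:ℝ)) * (r:ℝ)) * E := by ring
      _ ≤ (n:ℝ) * E := mul_le_mul_of_nonneg_right hun hEpos.le
      _ ≤ _ := hQsum
  rw [div_mul_eq_mul_div, one_mul, div_le_iff₀ hrposR]
  nlinarith [hkey]
end
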